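/- arXiv:solv-int/9809008 — 3 statements merged into one kernel-verified Lean document; each statement's English description precedes it below -/
import Mathlib

section
/- Under the stated recurrence hypotheses, for all x ≠ y in ℝ \ {−A₁,…,−A_n}: {V(x), W_N(y)} = (2/(x−y))·(W_N(x) − W_N(y)) − 2α_N(x,y)·U(x). -/
open scoped BigOperators
open Finset Matrix

noncomputable section

/-- Phase space ℝ^{2m}: a point is a pair (q, p). -/
abbrev Phase (m : ℕ) := (Fin m → ℝ) × (Fin m → ℝ)

/-- Partial derivative with respect to `q i`. -/
noncomputable def pdq {m : ℕ} (f : Phase m → ℝ) (i : Fin m) (x : Phase m) : ℝ :=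
  deriv (fun t => f (Function.update x.1 i t, x.2)) (x.1 i)

/-- Partial derivative with respect to `p i`. -/
noncomputable def pdp {m : ℕ} (f : Phase m → ℝ) (i : Fin m) (x : Phase m) : ℝ :=
  deriv (fun t => f (x.1, Function.update x.2 i t)) (x.2 i)

/-- Canonical Poisson bracket {f,g} = Σ_i (∂f/∂p_i ∂g/∂q_i − ∂f/∂q_i ∂g/∂p_i). -/
noncomputable def poisson {m : ℕ} (f g : Phase m → ℝ) (x : Phase m) : ℝ :=
  ∑ i, (pdp f i x * pdq g i x - pdq f i x * pdp g i x)

/-- Partial derivative of a function of q only. -/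
noncomputable def pdq' {m : ℕ} (f : (Fin m → ℝ) → ℝ) (i : Fin m) (q : Fin m → ℝ) : ℝ :=
  deriv (fun t => f (Function.update q i t)) (q i)

/-- U(z) = 4z − 4q_{n+1} + 4B − Σ q_i²/(z+A_i). -/
noncomputable def Ufun (n : ℕ) (A : Fin n → ℝ) (B : ℝ) (z : ℝ) (x : Phase (n+1)) : ℝ :=
  4 * z - 4 * x.1 (Fin.last n) + 4 * B - ∑ i : Fin n, (x.1 i.castSucc) ^ 2 / (z + A i)

/-- V(z) = 2p_{n+1} + Σ p_i q_i/(z+A_i). -/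
noncomputable def Vfun (n : ℕ) (A : Fin n → ℝ) (z : ℝ) (x : Phase (n+1)) : ℝ :=
  2 * x.2 (Fin.last n) + ∑ i : Fin n, x.2 i.castSucc * x.1 i.castSucc / (z + A i)

/-- Q_N(z) = z^{N−2} − (1/2) Σ_{k=0}^{N−3} (∂𝒰_{N−k−1}/∂q_{n+1}) z^k. -/
noncomputable def Qfun (n N : ℕ) (𝒰 : ℕ → (Fin (n+1) → ℝ) → ℝ) (z : ℝ)
    (x : Phase (n+1)) : ℝ :=
  z ^ (N-2) - (1/2) * ∑ k ∈ Finset.range (N-2), pdq' (𝒰 (N-k-1)) (Fin.last n) x.1 * z ^ k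

/-- W_N(z) = 4z^{N−1} − 2 Σ_{k=0}^{N−2} 𝒰_{N−k−1} z^k + Σ p_i²/(z+A_i). -/
noncomputable def Wfun (n N : ℕ) (A : Fin n → ℝ) (𝒰 : ℕ → (Fin (n+1) → ℝ) → ℝ) (z : ℝ)
    (x : Phase (n+1)) : ℝ :=
  4 * z ^ (N-1) - 2 * ∑ k ∈ Finset.range (N-1), 𝒰 (N-k-1) x.1 * z ^ k
    + ∑ i : Fin n, (x.2 i.castSucc) ^ 2 / (z + A i)

/-- α_N(x,y) = (Q_N(x) − Q_N(y))/(x − y). -/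
noncomputable def alphaFun (n N : ℕ) (𝒰 : ℕ → (Fin (n+1) → ℝ) → ℝ) (z w : ℝ)
    (x : Phase (n+1)) : ℝ :=
  (Qfun n N 𝒰 z x - Qfun n N 𝒰 w x) / (z - w)

/-- The hierarchy recurrence hypotheses on the potentials 𝒰₀,…,𝒰_M. -/
def Recur (n M : ℕ) (A : Fin n → ℝ) (B : ℝ) (𝒰 : ℕ → (Fin (n+1) → ℝ) → ℝ) : Prop :=
  (∀ m ≤ M, ContDiff ℝ (⊤ : ℕ∞) (𝒰 m)) ∧
  (∀ q, 𝒰 0 q = 0) ∧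
  (∀ q : Fin (n+1) → ℝ, 𝒰 1 q = -2 * q (Fin.last n) - 2 * B) ∧
  (∀ q : Fin (n+1) → ℝ,
      𝒰 2 q = -2 * (q (Fin.last n)) ^ 2 - (1/2) * ∑ i : Fin n, (q i.castSucc) ^ 2) ∧
  (∀ m, 2 ≤ m → m ≤ M → ∀ q : Fin (n+1) → ℝ,
    (∀ i : Fin n, pdq' (𝒰 m) i.castSucc q
        = (1/2) * q i.castSucc * pdq' (𝒰 (m-1)) (Fin.last n) q
          - A i * pdq' (𝒰 (m-1)) i.castSucc q) ∧
    pdq' (𝒰 m) (Fin.last n) q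
        = 𝒰 (m-1) q + (1/2) * ∑ i : Fin n, q i.castSucc * pdq' (𝒰 (m-1)) i.castSucc q
          + (q (Fin.last n) - B) * pdq' (𝒰 (m-1)) (Fin.last n) q)

/-- The Hamiltonian H_N = (1/2) Σ p_i² + 𝒰_N. -/
noncomputable def Hfun (n N : ℕ) (𝒰 : ℕ → (Fin (n+1) → ℝ) → ℝ) (x : Phase (n+1)) : ℝ :=
  (1/2) * ∑ i : Fin (n+1), (x.2 i) ^ 2 + 𝒰 N x.1
/-! Helper lemmas -/

lemma diffAt_update {m : ℕ} (q : Fin m → ℝ) (i : Fin m) (t : ℝ) :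
    DifferentiableAt ℝ (fun s => Function.update q i s) t := by
  apply differentiableAt_pi.mpr
  intro j
  rcases eq_or_ne j i with h | h
  · subst h; simp only [Function.update_self]; exact differentiableAt_fun_id
  · simp only [Function.update_of_ne h]; exact differentiableAt_const _

lemma diffAt_comp_update {m : ℕ} {f : (Fin m → ℝ) → ℝ} (hf : ContDiff ℝ (⊤ : ℕ∞) f)
    (q : Fin m → ℝ) (i : Fin m) (t : ℝ) :
    DifferentiableAt ℝ (fun s => f (Function.update q i s)) t :=
  (hf.differentiable (by simp) _).comp t (diffAt_update q i t)

lemma hasDerivAt_comp_update {m : ℕ} {f : (Fin m → ℝ) → ℝ} (hf : ContDiff ℝ (⊤ : ℕ∞) f)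
    (q : Fin m → ℝ) (i : Fin m) :
    HasDerivAt (fun s => f (Function.update q i s)) (pdq' f i q) (q i) :=
  (diffAt_comp_update hf q i (q i)).hasDerivAt

lemma castSucc_ne_last {n : ℕ} (j : Fin n) : (j.castSucc : Fin (n+1)) ≠ Fin.last n :=
  (Fin.castSucc_lt_last j).ne
lemma pdp_V_last {n : ℕ} (A : Fin n → ℝ) (x : ℝ) (pt : Phase (n+1)) :
    pdp (Vfun n A x) (Fin.last n) pt = 2 := by
  unfold pdp Vfun
  have h : (fun t => 2 * Function.update pt.2 (Fin.last n) t (Fin.last n)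
      + ∑ i : Fin n, Function.update pt.2 (Fin.last n) t i.castSucc * pt.1 i.castSucc / (x + A i))
      = fun t => 2 * t + ∑ i : Fin n, pt.2 i.castSucc * pt.1 i.castSucc / (x + A i) := by
    funext t
    simp only [Function.update_self]
    congr 1
    refine Finset.sum_congr rfl fun i _ => ?_
    rw [Function.update_of_ne (castSucc_ne_last i)]
  rw [h]
  have := (((hasDerivAt_id (pt.2 (Fin.last n))).const_mul 2).add_const
    (∑ i : Fin n, pt.2 i.castSucc * pt.1 i.castSucc / (x + A i))).deriv
  simpa using this

lemma pdq_V_last {n : ℕ} (A : Fin n → ℝ) (x : ℝ) (pt : Phase (n+1)) :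
    pdq (Vfun n A x) (Fin.last n) pt = 0 := by
  unfold pdq Vfun
  have h : (fun t => 2 * pt.2 (Fin.last n)
      + ∑ i : Fin n, pt.2 i.castSucc * Function.update pt.1 (Fin.last n) t i.castSucc / (x + A i))
      = fun _ => 2 * pt.2 (Fin.last n) + ∑ i : Fin n, pt.2 i.castSucc * pt.1 i.castSucc / (x + A i) := by
    funext t
    congr 1
    refine Finset.sum_congr rfl fun i _ => ?_
    rw [Function.update_of_ne (castSucc_ne_last i)]
  rw [h, deriv_const]

lemma pdp_W_last {n N : ℕ} (A : Fin n → ℝ) (𝒰 : ℕ → (Fin (n+1) → ℝ) → ℝ) (y : ℝ)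
    (pt : Phase (n+1)) :
    pdp (Wfun n N A 𝒰 y) (Fin.last n) pt = 0 := by
  unfold pdp Wfun
  have h : (fun t => 4 * y ^ (N-1) - 2 * ∑ k ∈ Finset.range (N-1), 𝒰 (N-k-1) pt.1 * y ^ k
      + ∑ i : Fin n, (Function.update pt.2 (Fin.last n) t i.castSucc) ^ 2 / (y + A i))
      = fun _ => 4 * y ^ (N-1) - 2 * ∑ k ∈ Finset.range (N-1), 𝒰 (N-k-1) pt.1 * y ^ k
      + ∑ i : Fin n, (pt.2 i.castSucc) ^ 2 / (y + A i) := by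
    funext t
    congr 1
    refine Finset.sum_congr rfl fun i _ => ?_
    rw [Function.update_of_ne (castSucc_ne_last i)]
  rw [h, deriv_const]

lemma pdp_V_castSucc {n : ℕ} (A : Fin n → ℝ) (x : ℝ) (pt : Phase (n+1)) (j : Fin n) :
    pdp (Vfun n A x) j.castSucc pt = pt.1 j.castSucc / (x + A j) := by
  unfold pdp Vfun
  apply HasDerivAt.deriv
  have h2 : HasDerivAt (fun t => ∑ i : Fin n,
      Function.update pt.2 j.castSucc t i.castSucc * pt.1 i.castSucc / (x + A i))
      (∑ i : Fin n, if i = j then pt.1 i.castSucc / (x + A i) else 0) (pt.2 j.castSucc) := by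
    apply HasDerivAt.fun_sum
    intro i _
    rcases eq_or_ne i j with h | h
    · subst h
      simp only [if_pos rfl]
      have h3 : (fun t => Function.update pt.2 i.castSucc t i.castSucc * pt.1 i.castSucc / (x + A i))
          = fun t => t * pt.1 i.castSucc / (x + A i) := by
        funext t; rw [Function.update_self]
      rw [h3]
      simpa using ((hasDerivAt_id (pt.2 i.castSucc)).mul_const (pt.1 i.castSucc)).div_const (x + A i)
    · simp only [if_neg h]
      have h3 : (fun t => Function.update pt.2 j.castSucc t i.castSucc * pt.1 i.castSucc / (x + A i))
          = fun _ => pt.2 i.castSucc * pt.1 i.castSucc / (x + A i) := by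
        funext t; rw [Function.update_of_ne (by simpa [Fin.castSucc_inj] using h)]
      rw [h3]; exact hasDerivAt_const _ _
  have h1 : HasDerivAt (fun t => 2 * Function.update pt.2 j.castSucc t (Fin.last n)) 0
      (pt.2 j.castSucc) := by
    have h3 : (fun t => 2 * Function.update pt.2 j.castSucc t (Fin.last n))
        = fun _ => 2 * pt.2 (Fin.last n) := by
      funext t; rw [Function.update_of_ne (castSucc_ne_last j).symm]
    rw [h3]; exact hasDerivAt_const _ _
  have := h1.fun_add h2
  simpa [Finset.sum_ite_eq' Finset.univ j] using this

lemma pdq_V_castSucc {n : ℕ} (A : Fin n → ℝ) (x : ℝ) (pt : Phase (n+1)) (j : Fin n) :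
    pdq (Vfun n A x) j.castSucc pt = pt.2 j.castSucc / (x + A j) := by
  unfold pdq Vfun
  apply HasDerivAt.deriv
  have h2 : HasDerivAt (fun t => ∑ i : Fin n,
      pt.2 i.castSucc * Function.update pt.1 j.castSucc t i.castSucc / (x + A i))
      (∑ i : Fin n, if i = j then pt.2 i.castSucc / (x + A i) else 0) (pt.1 j.castSucc) := by
    apply HasDerivAt.fun_sum
    intro i _
    rcases eq_or_ne i j with h | h
    · subst h
      simp only [if_pos rfl]
      have h3 : (fun t => pt.2 i.castSucc * Function.update pt.1 i.castSucc t i.castSucc / (x + A i))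
          = fun t => pt.2 i.castSucc * t / (x + A i) := by
        funext t; rw [Function.update_self]
      rw [h3]
      simpa using ((hasDerivAt_id (pt.1 i.castSucc)).const_mul (pt.2 i.castSucc)).div_const (x + A i)
    · simp only [if_neg h]
      have h3 : (fun t => pt.2 i.castSucc * Function.update pt.1 j.castSucc t i.castSucc / (x + A i))
          = fun _ => pt.2 i.castSucc * pt.1 i.castSucc / (x + A i) := by
        funext t; rw [Function.update_of_ne (by simpa [Fin.castSucc_inj] using h)]
      rw [h3]; exact hasDerivAt_const _ _
  have h1 : HasDerivAt (fun _ : ℝ => 2 * pt.2 (Fin.last n)) 0 (pt.1 j.castSucc) :=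
    hasDerivAt_const _ _
  have := h1.fun_add h2
  simpa [Finset.sum_ite_eq' Finset.univ j] using this

lemma pdp_W_castSucc {n N : ℕ} (A : Fin n → ℝ) (𝒰 : ℕ → (Fin (n+1) → ℝ) → ℝ) (y : ℝ)
    (pt : Phase (n+1)) (j : Fin n) :
    pdp (Wfun n N A 𝒰 y) j.castSucc pt = 2 * pt.2 j.castSucc / (y + A j) := by
  unfold pdp Wfun
  apply HasDerivAt.deriv
  have h2 : HasDerivAt (fun t => ∑ i : Fin n,
      (Function.update pt.2 j.castSucc t i.castSucc) ^ 2 / (y + A i))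
      (∑ i : Fin n, if i = j then 2 * pt.2 i.castSucc / (y + A i) else 0) (pt.2 j.castSucc) := by
    apply HasDerivAt.fun_sum
    intro i _
    rcases eq_or_ne i j with h | h
    · subst h
      simp only [if_pos rfl]
      have h3 : (fun t => (Function.update pt.2 i.castSucc t i.castSucc) ^ 2 / (y + A i))
          = fun t => t ^ 2 / (y + A i) := by
        funext t; rw [Function.update_self]
      rw [h3]
      have := ((hasDerivAt_pow 2 (pt.2 i.castSucc))).div_const (y + A i)
      simpa [mul_comm, mul_assoc, mul_div_assoc] using this
    · simp only [if_neg h]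
      have h3 : (fun t => (Function.update pt.2 j.castSucc t i.castSucc) ^ 2 / (y + A i))
          = fun _ => (pt.2 i.castSucc) ^ 2 / (y + A i) := by
        funext t; rw [Function.update_of_ne (by simpa [Fin.castSucc_inj] using h)]
      rw [h3]; exact hasDerivAt_const _ _
  have h1 : HasDerivAt (fun _ : ℝ => 4 * y ^ (N-1)
      - 2 * ∑ k ∈ Finset.range (N-1), 𝒰 (N-k-1) pt.1 * y ^ k) 0 (pt.2 j.castSucc) :=
    hasDerivAt_const _ _
  have := h1.fun_add h2
  simpa [Finset.sum_ite_eq' Finset.univ j] using this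

lemma pdq_W {n N : ℕ} (A : Fin n → ℝ) (𝒰 : ℕ → (Fin (n+1) → ℝ) → ℝ) (y : ℝ)
    (pt : Phase (n+1)) (i : Fin (n+1))
    (hsm : ∀ k ∈ Finset.range (N-1), ContDiff ℝ (⊤ : ℕ∞) (𝒰 (N-k-1))) :
    pdq (Wfun n N A 𝒰 y) i pt
      = -2 * ∑ k ∈ Finset.range (N-1), pdq' (𝒰 (N-k-1)) i pt.1 * y ^ k := by
  unfold pdq Wfun
  apply HasDerivAt.deriv
  have h2 : HasDerivAt (fun t => ∑ k ∈ Finset.range (N-1), 𝒰 (N-k-1) (Function.update pt.1 i t) * y ^ k)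
      (∑ k ∈ Finset.range (N-1), pdq' (𝒰 (N-k-1)) i pt.1 * y ^ k) (pt.1 i) := by
    apply HasDerivAt.fun_sum
    intro k hk
    exact (hasDerivAt_comp_update (hsm k hk) pt.1 i).mul_const _
  have h1 := ((h2.const_mul 2).const_sub (4 * y ^ (N-1))).add_const
    (∑ i : Fin n, (pt.2 i.castSucc) ^ 2 / (y + A i))
  simpa using h1
lemma telescope (x z : ℝ) (f g : ℕ → ℝ) :
    ∀ M : ℕ, 1 ≤ M → (∀ m, 1 ≤ m → m < M → f (m+1) = x * f m + g m) →
    (x - z) * ∑ k ∈ Finset.range M, z ^ k * f (M - k)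
      = x * f M - z ^ M * f 1 - ∑ k ∈ Finset.range (M-1), z ^ (k+1) * g (M-1-k) := by
  intro M hM
  induction M, hM using Nat.le_induction with
  | base =>
    intro _
    simp [Finset.sum_range_one]
    ring
  | succ M hM ih =>
    intro hrec
    have ih' := ih (fun m h1 h2 => hrec m h1 (by omega))
    have hs : ∑ k ∈ Finset.range (M+1), z ^ k * f (M+1-k)
        = z * (∑ k ∈ Finset.range M, z ^ k * f (M-k)) + f (M+1) := by
      rw [Finset.sum_range_succ', Finset.mul_sum]
      simp only [Nat.succ_sub_succ_eq_sub, pow_zero, one_mul, Nat.sub_zero]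
      congr 1
      exact Finset.sum_congr rfl fun k _ => by ring
    obtain ⟨M', rfl⟩ : ∃ M', M = M' + 1 := ⟨M - 1, by omega⟩
    have hg : ∑ k ∈ Finset.range (M'+1+1-1), z ^ (k+1) * g (M'+1+1-1-k)
        = z * (∑ k ∈ Finset.range (M'+1-1), z ^ (k+1) * g (M'+1-1-k)) + z * g (M'+1) := by
      simp only [Nat.add_sub_cancel]
      rw [Finset.sum_range_succ', Finset.mul_sum]
      simp only [Nat.succ_sub_succ_eq_sub, pow_zero, pow_succ, Nat.sub_zero]
      congr 1
      · exact Finset.sum_congr rfl fun k _ => by ring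
      · ring
    rw [hs, hg]
    have hf := hrec (M'+1) (by omega) (by omega)
    rw [mul_add, mul_comm (x - z) (z * _), mul_assoc, mul_comm _ (x-z), ih', hf]
    ring
/-- {V(x), W_N(y)} = (2/(x−y))(W_N(x) − W_N(y)) − 2α_N(x,y)U(x). -/
theorem VW_bracket
    (n : ℕ) (hn : 1 ≤ n) (A : Fin n → ℝ) (hA : Function.Injective A) (B : ℝ)
    (N : ℕ) (hN : 3 ≤ N) (𝒰 : ℕ → (Fin (n+1) → ℝ) → ℝ)
    (hrec : Recur n (N-1) A B 𝒰) :
    ∀ x y : ℝ, x ≠ y → (∀ i : Fin n, x ≠ -A i) → (∀ i : Fin n, y ≠ -A i) →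
    ∀ pt : Phase (n+1),
      poisson (Vfun n A x) (Wfun n N A 𝒰 y) pt
        = (2 / (x - y)) * (Wfun n N A 𝒰 x pt - Wfun n N A 𝒰 y pt)
          - 2 * alphaFun n N 𝒰 x y pt * Ufun n A B x pt := by
  obtain ⟨hsm, hU0, hU1, hU2, hR⟩ := hrec
  intro x y hxy hx hy pt
  have hxy' : x - y ≠ 0 := sub_ne_zero.mpr hxy
  have hc : ∀ j : Fin n, x + A j ≠ 0 := fun j h => hx j (by linarith)
  have hd : ∀ j : Fin n, y + A j ≠ 0 := fun j h => hy j (by linarith)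
  set S : ℕ → ℝ := fun m => ∑ j : Fin n,
    pt.1 j.castSucc * pdq' (𝒰 m) j.castSucc pt.1 / (x + A j) with hSd
  set F : ℕ → ℝ := fun m => S m + 2 * pdq' (𝒰 m) (Fin.last n) pt.1 with hFd
  set G : ℝ := ∑ j : Fin n, (pt.1 j.castSucc) ^ 2 / (x + A j) with hGd
  set UU : ℝ := Ufun n A B x pt with hUUd
  set g : ℕ → ℝ := fun m => 2 * 𝒰 m pt.1 - UU/2 * pdq' (𝒰 m) (Fin.last n) pt.1 with hgd
  set Psum : ℝ := ∑ j : Fin n,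
    (pt.2 j.castSucc) ^ 2 / ((x + A j) * (y + A j)) with hPd
  have hUU : UU = 4*x - 4*pt.1 (Fin.last n) + 4*B - G := by
    rw [hUUd]; unfold Ufun; rw [hGd]
  -- basic values at m = 1
  have hb1 : pdq' (𝒰 1) (Fin.last n) pt.1 = -2 := by
    unfold pdq'
    have he : (fun t => 𝒰 1 (Function.update pt.1 (Fin.last n) t))
        = fun t => -2 * t - 2 * B := by
      funext t; rw [hU1, Function.update_self]
    rw [he]
    have := (((hasDerivAt_id (pt.1 (Fin.last n))).const_mul (-2)).sub_const (2*B)).deriv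
    simpa using this
  have ha1 : ∀ j : Fin n, pdq' (𝒰 1) j.castSucc pt.1 = 0 := by
    intro j; unfold pdq'
    have he : (fun t => 𝒰 1 (Function.update pt.1 j.castSucc t))
        = fun _ => -2 * pt.1 (Fin.last n) - 2 * B := by
      funext t; rw [hU1, Function.update_of_ne (castSucc_ne_last j).symm]
    rw [he, deriv_const]
  have hF1 : F 1 = -4 := by
    rw [hFd]
    simp only [hSd, ha1, hb1]
    simp
    norm_num
  -- the recursion step for F
  have hstep : ∀ m, 1 ≤ m → m < N-1 → F (m+1) = x * F m + g m := by
    intro m h1 h2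
    obtain ⟨hA', hB'⟩ := hR (m+1) (by omega) (by omega) pt.1
    simp only [Nat.add_sub_cancel] at hA' hB'
    have hS : S (m+1) = x * S m
        + (1/2) * pdq' (𝒰 m) (Fin.last n) pt.1 * G
        - ∑ j : Fin n, pt.1 j.castSucc * pdq' (𝒰 m) j.castSucc pt.1 := by
      simp only [hSd, hGd]
      have hper : ∀ j : Fin n,
          pt.1 j.castSucc * pdq' (𝒰 (m+1)) j.castSucc pt.1 / (x + A j)
          = x * (pt.1 j.castSucc * pdq' (𝒰 m) j.castSucc pt.1 / (x + A j))
            + (1/2) * pdq' (𝒰 m) (Fin.last n) pt.1 * ((pt.1 j.castSucc) ^ 2 / (x + A j))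
            - pt.1 j.castSucc * pdq' (𝒰 m) j.castSucc pt.1 := by
        intro j
        rw [hA' j]
        field_simp [hc j]
        ring
      calc ∑ j : Fin n, pt.1 j.castSucc * pdq' (𝒰 (m+1)) j.castSucc pt.1 / (x + A j)
          = ∑ j : Fin n, (x * (pt.1 j.castSucc * pdq' (𝒰 m) j.castSucc pt.1 / (x + A j))
            + (1/2) * pdq' (𝒰 m) (Fin.last n) pt.1 * ((pt.1 j.castSucc) ^ 2 / (x + A j))
            - pt.1 j.castSucc * pdq' (𝒰 m) j.castSucc pt.1) :=
            Finset.sum_congr rfl fun j _ => hper j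
        _ = _ := by
            rw [Finset.sum_sub_distrib, Finset.sum_add_distrib, ← Finset.mul_sum,
              ← Finset.mul_sum]
    simp only [hFd, hgd]
    rw [hS, hB', hUU]
    ring
  -- telescope
  have hidx : ∀ k : ℕ, N - 1 - k = N - k - 1 := fun k => Nat.sub_right_comm N 1 k
  have hidx2 : N - 1 - 1 = N - 2 := by omega
  have T1 := telescope x y F g (N-1) (by omega) hstep
  have T2 := telescope x x F g (N-1) (by omega) hstep
  simp only [hidx2] at T1 T2
  simp only [hidx] at T1 T2
  -- the bracket computation
  have hsm' : ∀ k ∈ Finset.range (N-1), ContDiff ℝ (⊤ : ℕ∞) (𝒰 (N-k-1)) :=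
    fun k _ => hsm (N-k-1) (by omega)
  have hWd : ∀ i : Fin (n+1), pdq (Wfun n N A 𝒰 y) i pt
      = -2 * ∑ k ∈ Finset.range (N-1), pdq' (𝒰 (N-k-1)) i pt.1 * y ^ k :=
    fun i => pdq_W A 𝒰 y pt i hsm'
  have hbr : poisson (Vfun n A x) (Wfun n N A 𝒰 y) pt
      = -2 * (∑ k ∈ Finset.range (N-1), y ^ k * F (N-k-1)) - 2 * Psum := by
    unfold poisson
    rw [Fin.sum_univ_castSucc]
    simp only [hWd, pdp_V_castSucc, pdq_V_castSucc, pdp_W_castSucc, pdp_V_last,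
      pdq_V_last, pdp_W_last]
    simp only [hFd, hSd, hPd]
    have e1 : ∑ j : Fin n, pt.1 j.castSucc / (x + A j)
          * (-2 * ∑ k ∈ Finset.range (N-1), pdq' (𝒰 (N-k-1)) j.castSucc pt.1 * y ^ k)
        = -2 * ∑ k ∈ Finset.range (N-1), y ^ k
            * ∑ j : Fin n, pt.1 j.castSucc * pdq' (𝒰 (N-k-1)) j.castSucc pt.1 / (x + A j) := by
      calc ∑ j : Fin n, pt.1 j.castSucc / (x + A j)
            * (-2 * ∑ k ∈ Finset.range (N-1), pdq' (𝒰 (N-k-1)) j.castSucc pt.1 * y ^ k)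
          = ∑ j : Fin n, ∑ k ∈ Finset.range (N-1),
              (-2) * (y ^ k * (pt.1 j.castSucc * pdq' (𝒰 (N-k-1)) j.castSucc pt.1 / (x + A j))) := by
            refine Finset.sum_congr rfl fun j _ => ?_
            rw [Finset.mul_sum, Finset.mul_sum]
            exact Finset.sum_congr rfl fun k _ => by ring
        _ = ∑ k ∈ Finset.range (N-1), ∑ j : Fin n,
              (-2) * (y ^ k * (pt.1 j.castSucc * pdq' (𝒰 (N-k-1)) j.castSucc pt.1 / (x + A j))) :=
            Finset.sum_comm
        _ = _ := by
            simp only [Finset.mul_sum]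
    have e2 : ∑ j : Fin n, pt.2 j.castSucc / (x + A j) * (2 * pt.2 j.castSucc / (y + A j))
        = 2 * ∑ j : Fin n, (pt.2 j.castSucc) ^ 2 / ((x + A j) * (y + A j)) := by
      rw [Finset.mul_sum]
      refine Finset.sum_congr rfl fun j _ => ?_
      rw [div_mul_div_comm, ← mul_div_assoc]
      congr 1
      ring
    have e4 : ∑ k ∈ Finset.range (N-1), y ^ k
          * ((∑ j : Fin n, pt.1 j.castSucc * pdq' (𝒰 (N-k-1)) j.castSucc pt.1 / (x + A j))
            + 2 * pdq' (𝒰 (N-k-1)) (Fin.last n) pt.1)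
        = (∑ k ∈ Finset.range (N-1), y ^ k
            * ∑ j : Fin n, pt.1 j.castSucc * pdq' (𝒰 (N-k-1)) j.castSucc pt.1 / (x + A j))
          + 2 * ∑ k ∈ Finset.range (N-1), pdq' (𝒰 (N-k-1)) (Fin.last n) pt.1 * y ^ k := by
      rw [Finset.mul_sum, ← Finset.sum_add_distrib]
      exact Finset.sum_congr rfl fun k _ => by ring
    rw [Finset.sum_sub_distrib, e1, e2, e4]
    ring
  -- difference of W's
  have hW : Wfun n N A 𝒰 x pt - Wfun n N A 𝒰 y pt
      = 4 * x ^ (N-1) - 4 * y ^ (N-1)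
        - 2 * (∑ k ∈ Finset.range (N-1), 𝒰 (N-k-1) pt.1 * x ^ k)
        + 2 * (∑ k ∈ Finset.range (N-1), 𝒰 (N-k-1) pt.1 * y ^ k)
        - (x - y) * Psum := by
    unfold Wfun
    have e5 : (∑ j : Fin n, (pt.2 j.castSucc) ^ 2 / (x + A j))
          - ∑ j : Fin n, (pt.2 j.castSucc) ^ 2 / (y + A j)
        = -((x - y) * Psum) := by
      rw [hPd, Finset.mul_sum, ← Finset.sum_neg_distrib, ← Finset.sum_sub_distrib]
      refine Finset.sum_congr rfl fun j _ => ?_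
      field_simp [hc j, hd j]
      ring
    linear_combination e5
  -- Q rewritten
  have hQz : ∀ z : ℝ, Qfun n N 𝒰 z pt
      = -(1/2) * ∑ k ∈ Finset.range (N-1),
          pdq' (𝒰 (N-k-1)) (Fin.last n) pt.1 * z ^ k := by
    intro z
    unfold Qfun
    rw [show N - 1 = (N-2) + 1 from by omega, Finset.sum_range_succ,
      show N - (N-2) - 1 = 1 from by omega, hb1]
    ring
  -- the g-sums
  have hGz : ∀ z : ℝ, ∑ k ∈ Finset.range (N-2), z ^ (k+1) * g (N-2-k)
      = 2 * (∑ k ∈ Finset.range (N-1), 𝒰 (N-k-1) pt.1 * z ^ k)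
        - UU/2 * (∑ k ∈ Finset.range (N-1),
            pdq' (𝒰 (N-k-1)) (Fin.last n) pt.1 * z ^ k)
        - g (N-1) := by
    intro z
    have h1 : ∑ k ∈ Finset.range (N-1), z ^ k * g (N-k-1)
        = (∑ k ∈ Finset.range (N-2), z ^ (k+1) * g (N-2-k)) + g (N-1) := by
      rw [show N - 1 = (N-2) + 1 from by omega, Finset.sum_range_succ']
      simp only [pow_zero, one_mul, Nat.sub_zero]
      congr 1
      · refine Finset.sum_congr rfl fun k _ => ?_
        rw [show N - (k+1) - 1 = N - 2 - k from by omega]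
      · congr 1
        omega
    have h2 : ∑ k ∈ Finset.range (N-1), z ^ k * g (N-k-1)
        = 2 * (∑ k ∈ Finset.range (N-1), 𝒰 (N-k-1) pt.1 * z ^ k)
          - UU/2 * (∑ k ∈ Finset.range (N-1),
              pdq' (𝒰 (N-k-1)) (Fin.last n) pt.1 * z ^ k) := by
      simp only [hgd]
      rw [Finset.mul_sum, Finset.mul_sum, ← Finset.sum_sub_distrib]
      exact Finset.sum_congr rfl fun k _ => by ring
    linear_combination h2 - h1
  -- main multiplied-out identity
  have main : (-2 * (∑ k ∈ Finset.range (N-1), y ^ k * F (N-k-1)) - 2 * Psum) * (x - y)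
      = 2 * (Wfun n N A 𝒰 x pt - Wfun n N A 𝒰 y pt)
        - 2 * ((-(1/2) * ∑ k ∈ Finset.range (N-1),
              pdq' (𝒰 (N-k-1)) (Fin.last n) pt.1 * x ^ k)
            - (-(1/2) * ∑ k ∈ Finset.range (N-1),
              pdq' (𝒰 (N-k-1)) (Fin.last n) pt.1 * y ^ k)) * UU := by
    linear_combination (-2 : ℝ) * T1 + 2 * T2 - 2 * hW - 2 * (hGz x) + 2 * (hGz y)
      + (2*y^(N-1) - 2*x^(N-1)) * hF1
  -- conclude
  rw [hbr]
  unfold alphaFun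
  rw [hQz x, hQz y]
  rw [show (2 / (x-y)) * (Wfun n N A 𝒰 x pt - Wfun n N A 𝒰 y pt)
      - 2 * (((-(1/2) * ∑ k ∈ Finset.range (N-1),
            pdq' (𝒰 (N-k-1)) (Fin.last n) pt.1 * x ^ k)
          - (-(1/2) * ∑ k ∈ Finset.range (N-1),
            pdq' (𝒰 (N-k-1)) (Fin.last n) pt.1 * y ^ k)) / (x - y)) * UU
      = (2 * (Wfun n N A 𝒰 x pt - Wfun n N A 𝒰 y pt)
        - 2 * ((-(1/2) * ∑ k ∈ Finset.range (N-1),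
              pdq' (𝒰 (N-k-1)) (Fin.last n) pt.1 * x ^ k)
            - (-(1/2) * ∑ k ∈ Finset.range (N-1),
              pdq' (𝒰 (N-k-1)) (Fin.last n) pt.1 * y ^ k)) * UU) / (x - y) from by
    field_simp]
  rw [eq_div_iff hxy']
  linear_combination main
end
end

section
/- Under the stated recurrence hypotheses, for all x ≠ y in ℝ \ {−A₁,…,−A_n}: {Q_N(x), W_N(y)} + {W_N(x), Q_N(y)} = (∂α_N(x,y)/∂q_{n+1})·(V(x) − V(y)). -/
open scoped BigOperators
open Finset Matrix

noncomputable section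

lemma key_poly (N : ℕ) (hN : 3 ≤ N) (γ δ : ℕ → ℝ) (a c : ℝ)
    (h1 : γ 1 = 0) (hd1 : δ 1 = 0)
    (hrec : ∀ m, 2 ≤ m → m ≤ N-1 → γ m = c * δ (m-1) - a * γ (m-1)) (z : ℝ) :
    (z + a) * (∑ k ∈ Finset.range (N-2), γ (N-k-1) * z^k)
      = c * (∑ k ∈ Finset.range (N-2), δ (N-k-1) * z^k)
        + (a * γ (N-1) - c * δ (N-1)) := by
  have e1 : (z + a) * (∑ k ∈ Finset.range (N-2), γ (N-k-1) * z^k)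
      = ∑ k ∈ Finset.range (N-2), ((c * δ (N-(k+1)-1) * z^(k+1))
          + (a * γ (N-k-1) * z^k - a * γ (N-(k+1)-1) * z^(k+1))) := by
    rw [Finset.mul_sum]
    refine Finset.sum_congr rfl fun k hk => ?_
    have hk' : k < N-2 := Finset.mem_range.mp hk
    have hm := hrec (N-k-1) (by omega) (by omega)
    rw [show N-k-1-1 = N-(k+1)-1 from by omega] at hm
    linear_combination (z^(k+1)) * hm
  rw [e1, Finset.sum_add_distrib]
  have e2 : ∑ k ∈ Finset.range (N-2), (a * γ (N-k-1) * z^k - a * γ (N-(k+1)-1) * z^(k+1))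
      = a * γ (N-0-1) * z^0 - a * γ (N-(N-2)-1) * z^(N-2) :=
    Finset.sum_range_sub' (fun k => a * γ (N-k-1) * z^k) (N-2)
  have e3 : ∑ k ∈ Finset.range (N-2), c * δ (N-(k+1)-1) * z^(k+1)
      = (∑ k ∈ Finset.range (N-1), c * δ (N-k-1) * z^k) - c * δ (N-0-1) * z^0 := by
    have h := Finset.sum_range_succ' (fun k => c * δ (N-k-1) * z^k) (N-2)
    rw [show N-2+1 = N-1 from by omega] at h
    rw [h]; ring
  have e4 : ∑ k ∈ Finset.range (N-1), c * δ (N-k-1) * z^k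
      = (∑ k ∈ Finset.range (N-2), c * δ (N-k-1) * z^k) + c * δ (N-(N-2)-1) * z^(N-2) := by
    have h := Finset.sum_range_succ (fun k => c * δ (N-k-1) * z^k) (N-2)
    rw [show N-2+1 = N-1 from by omega] at h
    exact h
  have hg1 : γ (N-(N-2)-1) = 0 := by rw [show N-(N-2)-1 = 1 from by omega]; exact h1
  have hd1' : δ (N-(N-2)-1) = 0 := by rw [show N-(N-2)-1 = 1 from by omega]; exact hd1
  rw [e2, e3, e4, hg1, hd1', Finset.mul_sum]
  have : ∑ k ∈ Finset.range (N-2), c * δ (N-k-1) * z^k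
      = ∑ k ∈ Finset.range (N-2), c * (δ (N-k-1) * z^k) :=
    Finset.sum_congr rfl fun k _ => by ring
  rw [this, Nat.sub_zero]
  ring
namespace QWaux

lemma update_eq_add {m : ℕ} (q : Fin m → ℝ) (i : Fin m) (t : ℝ) :
    Function.update q i t = q + (t - q i) • (Pi.single i (1:ℝ) : Fin m → ℝ) := by
  funext j
  by_cases h : j = i
  · subst h; simp
  · simp [Function.update_of_ne h, Pi.single_apply, h]

lemma hasDerivAt_update_comp {m : ℕ} {f : (Fin m → ℝ) → ℝ} {q : Fin m → ℝ} {i : Fin m}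
    {L : (Fin m → ℝ) →L[ℝ] ℝ} (hf : HasFDerivAt f L q) :
    HasDerivAt (fun t => f (Function.update q i t)) (L (Pi.single i 1)) (q i) := by
  have hg : HasDerivAt (fun t : ℝ => q + (t - q i) • (Pi.single i 1 : Fin m → ℝ))
      (Pi.single i 1) (q i) := by
    simpa using (((hasDerivAt_id (q i)).sub_const (q i)).smul_const
      (Pi.single i 1 : Fin m → ℝ)).const_add q
  have hf' : HasFDerivAt f L (q + ((q i) - q i) • (Pi.single i 1 : Fin m → ℝ)) := by
    simpa using hf
  have h2 := hf'.comp_hasDerivAt (q i) hg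
  have hfun : (fun t => f (q + (t - q i) • (Pi.single i 1 : Fin m → ℝ)))
      = (fun t => f (Function.update q i t)) := by
    funext t; rw [update_eq_add]
  rw [← hfun]
  exact h2

lemma pdq'_of_hasDerivAt {m : ℕ} {f : (Fin m → ℝ) → ℝ} {q : Fin m → ℝ} {i : Fin m} {v : ℝ}
    (h : HasDerivAt (fun t => f (Function.update q i t)) v (q i)) : pdq' f i q = v :=
  h.deriv

lemma pdq'_eq_fderiv {m : ℕ} {f : (Fin m → ℝ) → ℝ} {q : Fin m → ℝ} (i : Fin m)
    (hf : DifferentiableAt ℝ f q) :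
    pdq' f i q = fderiv ℝ f q (Pi.single i 1) :=
  (hasDerivAt_update_comp hf.hasFDerivAt).deriv

/-- second derivative pairing -/
noncomputable def sd2 {m : ℕ} (f : (Fin m → ℝ) → ℝ) (q : Fin m → ℝ) (i j : Fin m) : ℝ :=
  fderiv ℝ (fderiv ℝ f) q (Pi.single i 1) (Pi.single j 1)

lemma hasDerivAt_pdq'_update {m : ℕ} {f : (Fin m → ℝ) → ℝ} (hf : ContDiff ℝ (⊤ : ℕ∞) f)
    (q : Fin m → ℝ) (i j : Fin m) :
    HasDerivAt (fun t => pdq' f j (Function.update q i t)) (sd2 f q i j) (q i) := by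
  have hfd : ∀ q', pdq' f j q' = fderiv ℝ f q' (Pi.single j 1) := fun q' =>
    pdq'_eq_fderiv j (hf.differentiable (by simp) q')
  have h1 : HasFDerivAt (fderiv ℝ f) (fderiv ℝ (fderiv ℝ f) q) q :=
    ((hf.fderiv_right (m := 1) (WithTop.coe_le_coe.mpr le_top)).differentiable one_ne_zero q).hasFDerivAt
  have hG : HasFDerivAt (fun q' => fderiv ℝ f q' (Pi.single j 1))
      ((fderiv ℝ (fderiv ℝ f) q).flip (Pi.single j 1)) q := by
    have h2 := h1.clm_apply (hasFDerivAt_const (Pi.single j 1 : Fin m → ℝ) q)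
    simpa using h2
  have h3 := hasDerivAt_update_comp (i := i) hG
  simp only [ContinuousLinearMap.flip_apply] at h3
  have hfun : (fun t => fderiv ℝ f (Function.update q i t) (Pi.single j 1))
      = (fun t => pdq' f j (Function.update q i t)) := by
    funext t; rw [hfd]
  rw [← hfun]
  exact h3

lemma pdq'_pdq'_eq {m : ℕ} {f : (Fin m → ℝ) → ℝ} (hf : ContDiff ℝ (⊤ : ℕ∞) f)
    (q : Fin m → ℝ) (i j : Fin m) :
    pdq' (fun q' => pdq' f j q') i q = sd2 f q i j :=
  (hasDerivAt_pdq'_update hf q i j).deriv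

lemma sd2_symm {m : ℕ} {f : (Fin m → ℝ) → ℝ} (hf : ContDiff ℝ (⊤ : ℕ∞) f)
    (q : Fin m → ℝ) (i j : Fin m) :
    sd2 f q i j = sd2 f q j i :=
  second_derivative_symmetric (fun y => (hf.differentiable (by simp) y).hasFDerivAt)
    ((hf.fderiv_right (m := 1) (WithTop.coe_le_coe.mpr le_top)).differentiable one_ne_zero q).hasFDerivAt _ _

lemma alg_term (x y a p q Px Py Dx Dy K w1 w2 : ℝ)
    (hx : x + a ≠ 0) (hy : y + a ≠ 0) (hxy : x - y ≠ 0)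
    (hkx : (x + a) * Px = 1/2 * q * Dx + K)
    (hky : (y + a) * Py = 1/2 * q * Dy + K) :
    0 * w1 - (0 - 1/2 * Px) * (2 * p / (y + a))
      + (2 * p / (x + a) * (0 - 1/2 * Py) - w2 * 0)
    = (0 - 1/2 * Dx - (0 - 1/2 * Dy)) / (x - y) * (p * q / (x + a) - p * q / (y + a)) := by
  have hPx' : Px = (1/2 * q * Dx + K) / (x + a) := by
    rw [eq_div_iff hx]; linear_combination hkx
  have hPy' : Py = (1/2 * q * Dy + K) / (y + a) := by
    rw [eq_div_iff hy]; linear_combination hky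
  rw [hPx', hPy']
  field_simp
  ring

end QWaux

set_option maxHeartbeats 2000000 in
/-- {Q_N(x), W_N(y)} + {W_N(x), Q_N(y)}
= (∂α_N(x,y)/∂q_{n+1})(V(x) − V(y)). -/
theorem QW_bracket
    (n : ℕ) (hn : 1 ≤ n) (A : Fin n → ℝ) (hA : Function.Injective A) (B : ℝ)
    (N : ℕ) (hN : 3 ≤ N) (𝒰 : ℕ → (Fin (n+1) → ℝ) → ℝ)
    (hrec : Recur n (N-1) A B 𝒰) :
    ∀ x y : ℝ, x ≠ y → (∀ i : Fin n, x ≠ -A i) → (∀ i : Fin n, y ≠ -A i) →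
    ∀ pt : Phase (n+1),
      poisson (Qfun n N 𝒰 x) (Wfun n N A 𝒰 y) pt
        + poisson (Wfun n N A 𝒰 x) (Qfun n N 𝒰 y) pt
      = pdq (alphaFun n N 𝒰 x y) (Fin.last n) pt
          * (Vfun n A x pt - Vfun n A y pt) := by

  intro x y hxy hxA hyA pt
  obtain ⟨hsm, h0, h1, h2, hrec5⟩ := hrec
  have hNN : 1 ≤ N - 1 := by omega
  have hlastne : ∀ j : Fin n, j.castSucc ≠ Fin.last n := fun j => (Fin.castSucc_lt_last j).ne
  -- first partial of 𝒰 1 in the last direction is the constant -2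
  have hU1 : ∀ q' : Fin (n+1) → ℝ, pdq' (𝒰 1) (Fin.last n) q' = -2 := by
    intro q'
    unfold pdq'
    have hfe : (fun t => 𝒰 1 (Function.update q' (Fin.last n) t)) = fun t => -2 * t - 2 * B := by
      funext t; rw [h1]; simp
    rw [hfe]
    simpa using (((hasDerivAt_id (q' (Fin.last n))).const_mul (-2:ℝ)).sub_const (2*B)).deriv
  -- second partials of 𝒰 1 vanish
  have hsd1 : ∀ i : Fin (n+1), QWaux.sd2 (𝒰 1) pt.1 i (Fin.last n) = 0 := by
    intro i
    rw [← QWaux.pdq'_pdq'_eq (hsm 1 hNN) pt.1 i (Fin.last n)]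
    have hfe : (fun q' => pdq' (𝒰 1) (Fin.last n) q') = fun _ => (-2:ℝ) := funext hU1
    rw [hfe]
    unfold pdq'
    simp
  -- the recursion at the level of mixed second partials
  have hsdrec : ∀ m, 2 ≤ m → m ≤ N-1 → ∀ j : Fin n,
      QWaux.sd2 (𝒰 m) pt.1 j.castSucc (Fin.last n)
        = 1/2 * pt.1 j.castSucc * QWaux.sd2 (𝒰 (m-1)) pt.1 (Fin.last n) (Fin.last n)
          - A j * QWaux.sd2 (𝒰 (m-1)) pt.1 j.castSucc (Fin.last n) := by
    intro m hm hm' j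
    have hsm' : ContDiff ℝ (⊤ : ℕ∞) (𝒰 m) := hsm m hm'
    have hsm1 : ContDiff ℝ (⊤ : ℕ∞) (𝒰 (m-1)) := hsm (m-1) (by omega)
    rw [QWaux.sd2_symm hsm', ← QWaux.pdq'_pdq'_eq hsm' pt.1 (Fin.last n) j.castSucc]
    have hfun : (fun q' => pdq' (𝒰 m) j.castSucc q') = fun q' =>
        1/2 * q' j.castSucc * pdq' (𝒰 (m-1)) (Fin.last n) q'
          - A j * pdq' (𝒰 (m-1)) j.castSucc q' :=
      funext fun q' => ((hrec5 m hm hm' q').1 j)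
    rw [hfun]
    have hd : HasDerivAt (fun t =>
        1/2 * pt.1 j.castSucc * pdq' (𝒰 (m-1)) (Fin.last n) (Function.update pt.1 (Fin.last n) t)
          - A j * pdq' (𝒰 (m-1)) j.castSucc (Function.update pt.1 (Fin.last n) t))
        (1/2 * pt.1 j.castSucc * QWaux.sd2 (𝒰 (m-1)) pt.1 (Fin.last n) (Fin.last n)
          - A j * QWaux.sd2 (𝒰 (m-1)) pt.1 (Fin.last n) j.castSucc) (pt.1 (Fin.last n)) :=
      (HasDerivAt.const_mul (1/2 * pt.1 j.castSucc)
          (QWaux.hasDerivAt_pdq'_update hsm1 pt.1 (Fin.last n) (Fin.last n))).sub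
        (HasDerivAt.const_mul (A j)
          (QWaux.hasDerivAt_pdq'_update hsm1 pt.1 (Fin.last n) j.castSucc))
    have hfe : (fun t => (fun q' =>
        1/2 * q' j.castSucc * pdq' (𝒰 (m-1)) (Fin.last n) q'
          - A j * pdq' (𝒰 (m-1)) j.castSucc q') (Function.update pt.1 (Fin.last n) t))
        = (fun t =>
        1/2 * pt.1 j.castSucc * pdq' (𝒰 (m-1)) (Fin.last n) (Function.update pt.1 (Fin.last n) t)
          - A j * pdq' (𝒰 (m-1)) j.castSucc (Function.update pt.1 (Fin.last n) t)) := by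
      funext t
      show 1/2 * (Function.update pt.1 (Fin.last n) t) j.castSucc
            * pdq' (𝒰 (m-1)) (Fin.last n) (Function.update pt.1 (Fin.last n) t)
          - A j * pdq' (𝒰 (m-1)) j.castSucc (Function.update pt.1 (Fin.last n) t) = _
      rw [Function.update_of_ne (hlastne j)]
    have hd' : HasDerivAt (fun t => (fun q' =>
        1/2 * q' j.castSucc * pdq' (𝒰 (m-1)) (Fin.last n) q'
          - A j * pdq' (𝒰 (m-1)) j.castSucc q') (Function.update pt.1 (Fin.last n) t))
        (1/2 * pt.1 j.castSucc * QWaux.sd2 (𝒰 (m-1)) pt.1 (Fin.last n) (Fin.last n)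
          - A j * QWaux.sd2 (𝒰 (m-1)) pt.1 (Fin.last n) j.castSucc) (pt.1 (Fin.last n)) := by
      rw [hfe]; exact hd
    exact (QWaux.pdq'_of_hasDerivAt hd').trans
      (by rw [QWaux.sd2_symm hsm1 pt.1 (Fin.last n) j.castSucc])
  -- derivative of Q in the q-directions
  have hQd : ∀ (z : ℝ) (i : Fin (n+1)), HasDerivAt
      (fun t => Qfun n N 𝒰 z (Function.update pt.1 i t, pt.2))
      (0 - 1/2 * ∑ k ∈ Finset.range (N-2),
        QWaux.sd2 (𝒰 (N-k-1)) pt.1 i (Fin.last n) * z ^ k) (pt.1 i) := by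
    intro z i
    exact (hasDerivAt_const _ _).sub (HasDerivAt.const_mul _ (HasDerivAt.fun_sum
      (fun k _ => (QWaux.hasDerivAt_pdq'_update (hsm (N-k-1) (by omega)) pt.1 i
        (Fin.last n)).mul_const _)))
  have hQq : ∀ (z : ℝ) (i : Fin (n+1)), pdq (Qfun n N 𝒰 z) i pt
      = 0 - 1/2 * ∑ k ∈ Finset.range (N-2),
          QWaux.sd2 (𝒰 (N-k-1)) pt.1 i (Fin.last n) * z ^ k :=
    fun z i => (hQd z i).deriv
  -- Q does not depend on p
  have hQp : ∀ (z : ℝ) (i : Fin (n+1)), pdp (Qfun n N 𝒰 z) i pt = 0 := by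
    intro z i
    have hfe : (fun t => Qfun n N 𝒰 z (pt.1, Function.update pt.2 i t))
        = fun _ => Qfun n N 𝒰 z pt := by funext t; rfl
    unfold pdp
    rw [hfe]
    exact deriv_const _ _
  -- p-derivatives of W
  have hWc : ∀ (z : ℝ) (j : Fin n), pdp (Wfun n N A 𝒰 z) j.castSucc pt
      = 2 * pt.2 j.castSucc / (z + A j) := by
    intro z j
    unfold pdp
    show deriv (fun t => 4 * z ^ (N-1) - 2 * ∑ k ∈ Finset.range (N-1), 𝒰 (N-k-1) pt.1 * z ^ k
      + ∑ i : Fin n, (Function.update pt.2 j.castSucc t i.castSucc) ^ 2 / (z + A i))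
      (pt.2 j.castSucc) = _
    have hsum : HasDerivAt (fun t => ∑ i : Fin n,
        (Function.update pt.2 j.castSucc t i.castSucc) ^ 2 / (z + A i))
        (∑ i : Fin n, if i = j then 2 * pt.2 j.castSucc / (z + A j) else 0)
        (pt.2 j.castSucc) := by
      refine HasDerivAt.fun_sum fun i _ => ?_
      by_cases hij : i = j
      · subst hij
        rw [if_pos rfl]
        have hfe : (fun t => (Function.update pt.2 i.castSucc t i.castSucc) ^ 2 / (z + A i))
            = fun t => t ^ 2 / (z + A i) := by
          funext t; rw [Function.update_self]
        rw [hfe]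
        have hp := (hasDerivAt_pow 2 (pt.2 i.castSucc)).div_const (z + A i)
        norm_num at hp
        exact hp
      · rw [if_neg hij]
        have hfe : (fun t => (Function.update pt.2 j.castSucc t i.castSucc) ^ 2 / (z + A i))
            = fun _ => (pt.2 i.castSucc) ^ 2 / (z + A i) := by
          funext t
          rw [Function.update_of_ne (by simpa [Fin.castSucc_inj] using hij)]
        rw [hfe]
        exact hasDerivAt_const _ _
    have hc := (hasDerivAt_const (pt.2 j.castSucc)
        (4 * z ^ (N-1) - 2 * ∑ k ∈ Finset.range (N-1), 𝒰 (N-k-1) pt.1 * z ^ k)).add hsum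
    refine hc.deriv.trans ?_
    simp
  have hWl : ∀ (z : ℝ), pdp (Wfun n N A 𝒰 z) (Fin.last n) pt = 0 := by
    intro z
    unfold pdp
    have hfe : (fun t => Wfun n N A 𝒰 z (pt.1, Function.update pt.2 (Fin.last n) t))
        = fun _ => Wfun n N A 𝒰 z pt := by
      funext t
      show 4 * z ^ (N-1) - 2 * ∑ k ∈ Finset.range (N-1), 𝒰 (N-k-1) pt.1 * z ^ k
        + ∑ i : Fin n, (Function.update pt.2 (Fin.last n) t i.castSucc) ^ 2 / (z + A i)
        = 4 * z ^ (N-1) - 2 * ∑ k ∈ Finset.range (N-1), 𝒰 (N-k-1) pt.1 * z ^ k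
        + ∑ i : Fin n, (pt.2 i.castSucc) ^ 2 / (z + A i)
      congr 1
      exact Finset.sum_congr rfl fun i _ => by
        rw [Function.update_of_ne (hlastne i)]
    rw [hfe]
    exact deriv_const _ _
  -- derivative of alpha
  have halpha : pdq (alphaFun n N 𝒰 x y) (Fin.last n) pt
      = ((0 - 1/2 * ∑ k ∈ Finset.range (N-2),
            QWaux.sd2 (𝒰 (N-k-1)) pt.1 (Fin.last n) (Fin.last n) * x ^ k)
        - (0 - 1/2 * ∑ k ∈ Finset.range (N-2),
            QWaux.sd2 (𝒰 (N-k-1)) pt.1 (Fin.last n) (Fin.last n) * y ^ k)) / (x - y) :=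
    (((hQd x (Fin.last n)).sub (hQd y (Fin.last n))).div_const (x - y)).deriv
  -- difference of V
  have hV : Vfun n A x pt - Vfun n A y pt
      = ∑ j : Fin n, (pt.2 j.castSucc * pt.1 j.castSucc / (x + A j)
          - pt.2 j.castSucc * pt.1 j.castSucc / (y + A j)) := by
    unfold Vfun
    rw [Finset.sum_sub_distrib]
    ring
  -- nonvanishing denominators
  have hxj : ∀ j : Fin n, x + A j ≠ 0 := fun j h => hxA j (by linarith)
  have hyj : ∀ j : Fin n, y + A j ≠ 0 := fun j h => hyA j (by linarith)
  have hxy' : x - y ≠ 0 := sub_ne_zero_of_ne hxy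
  -- the key polynomial identity
  have hkey : ∀ (j : Fin n) (z : ℝ),
      (z + A j) * (∑ k ∈ Finset.range (N-2),
          QWaux.sd2 (𝒰 (N-k-1)) pt.1 j.castSucc (Fin.last n) * z^k)
        = 1/2 * pt.1 j.castSucc * (∑ k ∈ Finset.range (N-2),
            QWaux.sd2 (𝒰 (N-k-1)) pt.1 (Fin.last n) (Fin.last n) * z^k)
          + (A j * QWaux.sd2 (𝒰 (N-1)) pt.1 j.castSucc (Fin.last n)
            - 1/2 * pt.1 j.castSucc * QWaux.sd2 (𝒰 (N-1)) pt.1 (Fin.last n) (Fin.last n)) := by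
    intro j z
    exact key_poly N hN (fun m => QWaux.sd2 (𝒰 m) pt.1 j.castSucc (Fin.last n))
      (fun m => QWaux.sd2 (𝒰 m) pt.1 (Fin.last n) (Fin.last n))
      (A j) (1/2 * pt.1 j.castSucc) (hsd1 j.castSucc) (hsd1 (Fin.last n))
      (fun m hm hm' => hsdrec m hm hm' j) z
  -- assemble
  unfold poisson
  rw [← Finset.sum_add_distrib, Fin.sum_univ_castSucc]
  have hlast0 : (pdp (Qfun n N 𝒰 x) (Fin.last n) pt * pdq (Wfun n N A 𝒰 y) (Fin.last n) pt
        - pdq (Qfun n N 𝒰 x) (Fin.last n) pt * pdp (Wfun n N A 𝒰 y) (Fin.last n) pt)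
      + (pdp (Wfun n N A 𝒰 x) (Fin.last n) pt * pdq (Qfun n N 𝒰 y) (Fin.last n) pt
        - pdq (Wfun n N A 𝒰 x) (Fin.last n) pt * pdp (Qfun n N 𝒰 y) (Fin.last n) pt) = 0 := by
    rw [hQp x, hQp y, hWl x, hWl y]
    ring
  rw [hlast0, add_zero, halpha, hV, Finset.mul_sum]
  refine Finset.sum_congr rfl fun j _ => ?_
  rw [hQp x, hQp y, hWc x j, hWc y j, hQq x j.castSucc, hQq y j.castSucc]
  exact QWaux.alg_term x y (A j) (pt.2 j.castSucc) (pt.1 j.castSucc)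
    (∑ k ∈ Finset.range (N-2), QWaux.sd2 (𝒰 (N-k-1)) pt.1 j.castSucc (Fin.last n) * x ^ k)
    (∑ k ∈ Finset.range (N-2), QWaux.sd2 (𝒰 (N-k-1)) pt.1 j.castSucc (Fin.last n) * y ^ k)
    (∑ k ∈ Finset.range (N-2), QWaux.sd2 (𝒰 (N-k-1)) pt.1 (Fin.last n) (Fin.last n) * x ^ k)
    (∑ k ∈ Finset.range (N-2), QWaux.sd2 (𝒰 (N-k-1)) pt.1 (Fin.last n) (Fin.last n) * y ^ k)
    (A j * QWaux.sd2 (𝒰 (N-1)) pt.1 j.castSucc (Fin.last n)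
      - 1/2 * pt.1 j.castSucc * QWaux.sd2 (𝒰 (N-1)) pt.1 (Fin.last n) (Fin.last n))
    (pdq (Wfun n N A 𝒰 y) j.castSucc pt) (pdq (Wfun n N A 𝒰 x) j.castSucc pt)
    (hxj j) (hyj j) hxy' (hkey j x) (hkey j y)
end
end

section
/- Parabolic coordinates: suppose real numbers q₁,…,q_{n+1} and μ₁,…,μ_{n+1} satisfy the polynomial identity (4z − 4q_{n+1} + 4B)·Π_{i=1}^n (z + A_i) − Σ_{i=1}^n q_i²·Π_{k≠i}(z + A_k) = 4·Π_{j=1}^{n+1}(z − μ_j) for all z ∈ ℝ (equivalently, the μ_j are the zeros of the rational function U(z) = 4z − 4q_{n+1} + 4B − Σ_{i=1}^n q_i²/(z+A_i)). Then q_{n+1} = Σ_{i=1}^n A_i + B + Σ_{j=1}^{n+1} μ_j and, for each m = 1,…,n, q_m² = −4·Π_{j=1}^{n+1}(μ_j + A_m) / Π_{k≠m}(A_m − A_k) (for n = 1 the empty product in the denominator is 1, so q₁² = −4(μ₁ + A₁)(μ₂ + A₁)). -/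
/-!
Clearing the denominators of `U`, the hypothesis is an identity between polynomials of degree
`n + 1`. The sum over `i` has degree `n - 1`, so comparing the coefficients of `z ^ n` (sums of
roots) gives `q_{n+1}`. Evaluating at the pole `z = -A m` kills the leading part and every term
of the sum except the `m`-th, which leaves `q_m²` times a product of differences `A k - A m`.
-/

open Finset Polynomial

section

variable {R : Type*} [CommRing R] {ι : Type*} [Fintype ι] [DecidableEq ι]

theorem Polynomial.coeff_sum_C_mul_prod_sdiff_singleton_card (w a : ι → R) :
    (∑ i, C (w i) * ∏ k ∈ univ \ {i}, (X + C (a k))).coeff (Fintype.card ι) = 0 := by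
  refine (finsetSum_coeff _ _ _).trans (sum_eq_zero fun i _ => ?_)
  have hcard : 0 < Fintype.card ι := Fintype.card_pos_iff.mpr ⟨i⟩
  rw [coeff_C_mul, coeff_eq_zero_of_natDegree_lt, mul_zero]
  simp only [natDegree_prod_of_monic _ _ fun k _ => monic_X_add_C (a k), natDegree_add_C,
    sum_const, card_sdiff, card_univ, inter_univ, card_singleton, smul_eq_mul]
  exact (Nat.mul_le_mul_left _ natDegree_X_le).trans_lt (by omega)

theorem sum_mul_prod_sdiff_singleton_neg_add (w a : ι → R) (m : ι) :
    ∑ i, w i * ∏ k ∈ univ \ {i}, (-a m + a k) = w m * ∏ k ∈ univ \ {m}, (-a m + a k) := by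
  refine sum_eq_single m (fun i _ him => ?_) (by simp)
  rw [prod_eq_zero (i := m) (by simp [him.symm]) (neg_add_cancel _), mul_zero]

end

section

variable {K : Type*} [Field K] {n : ℕ}

theorem Polynomial.coeff_prod_fin_succ_X_sub_C (f : Fin (n + 1) → K) :
    (∏ j, (X - C (f j))).coeff n = -∑ j, f j := by
  simpa using prod_X_sub_C_coeff_card_pred univ f (by simp)

theorem eq_sum_add_add_sum_of_forall_eq_prod [CharZero K] (A w : Fin n → K) (B c : K)
    (μ : Fin (n + 1) → K)
    (h : ∀ z, (4 * z - 4 * c + 4 * B) * ∏ i, (z + A i)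
        - ∑ i, w i * ∏ k ∈ univ \ {i}, (z + A k) = 4 * ∏ j, (z - μ j)) :
    c = ∑ i, A i + B + ∑ j, μ j := by
  -- the roots of the leading part `(4z - 4c + 4B) * ∏ (z + A i)`
  set ν : Fin (n + 1) → K := Fin.cons (c - B) (-A)
  have hpoly : C 4 * ∏ j, (X - C (ν j)) - ∑ i, C (w i) * ∏ k ∈ univ \ {i}, (X + C (A k))
      = C 4 * ∏ j, (X - C (μ j)) := by
    refine Polynomial.funext fun z => ?_
    simp only [eval_sub, eval_mul, eval_C, eval_prod, eval_finsetSum, eval_X, eval_add]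
    rw [Fin.prod_univ_succ fun j => z - ν j]
    simp only [ν, Fin.cons_zero, Fin.cons_succ, Pi.neg_apply, sub_neg_eq_add]
    linear_combination h z
  have hcoeff := congrArg (coeff · n) hpoly
  simp only [coeff_sub, coeff_C_mul, coeff_prod_fin_succ_X_sub_C] at hcoeff
  have hS := coeff_sum_C_mul_prod_sdiff_singleton_card w A
  rw [Fintype.card_fin] at hS
  rw [hS, Fin.sum_univ_succ ν] at hcoeff
  simp only [ν, Fin.cons_zero, Fin.cons_succ, Pi.neg_apply, sum_neg_distrib] at hcoeff
  linear_combination (-1 / 4 : K) * hcoeff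

theorem eq_neg_four_mul_prod_div_prod_of_eval_neg (A : Fin n → K) (hA : Function.Injective A)
    (d : K) (w : Fin n → K) (μ : Fin (n + 1) → K) (m : Fin n)
    (h : d * ∏ i, (-A m + A i) - ∑ i, w i * ∏ k ∈ univ \ {i}, (-A m + A k)
        = 4 * ∏ j, (-A m - μ j)) :
    w m = -4 * (∏ j, (μ j + A m)) / ∏ k ∈ univ \ {m}, (A m - A k) := by
  rw [prod_eq_zero (mem_univ m) (neg_add_cancel _), mul_zero, zero_sub,
    sum_mul_prod_sdiff_singleton_neg_add] at h
  -- both sides pick up the same sign, since `n + 1` and `#(univ \ {m}) = n - 1` have equal parity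
  set ε : K := (-1) ^ #(univ \ {m})
  have hε : ε * ε = 1 := by rw [← pow_add, Even.neg_one_pow ⟨_, rfl⟩]
  have hsign : (-1 : K) ^ (n + 1) = ε := by
    have : #(univ \ {m}) + 2 = n + 1 := by
      have := m.pos
      simp only [card_sdiff, card_univ, Fintype.card_fin, inter_univ, card_singleton]
      omega
    rw [← this, pow_add, neg_one_sq, mul_one]
  have hleft : ∏ k ∈ univ \ {m}, (-A m + A k) = ε * ∏ k ∈ univ \ {m}, (A m - A k) :=
    (prod_congr rfl fun k _ => by ring).trans (prod_neg _)
  have hright : ∏ j, (-A m - μ j) = ε * ∏ j, (μ j + A m) := by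
    calc ∏ j, (-A m - μ j) = ∏ j, -(μ j + A m) := prod_congr rfl fun j _ => by ring
      _ = (-1) ^ (n + 1) * ∏ j, (μ j + A m) := by rw [prod_neg, card_univ, Fintype.card_fin]
      _ = ε * ∏ j, (μ j + A m) := by rw [hsign]
  have hD : ∏ k ∈ univ \ {m}, (A m - A k) ≠ 0 :=
    prod_ne_zero_iff.mpr fun k hk => sub_ne_zero.mpr <| hA.ne <| Ne.symm <| by simpa using hk
  rw [hleft, hright] at h
  rw [eq_div_iff hD]
  linear_combination
    (-ε) * h - (w m * ∏ k ∈ univ \ {m}, (A m - A k) + 4 * ∏ j, (μ j + A m)) * hε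

end

theorem parabolic_coordinates_general
    (n : ℕ) (A : Fin n → ℝ) (hA : Function.Injective A) (B : ℝ)
    (q : Fin (n+1) → ℝ) (μ : Fin (n+1) → ℝ)
    (hU : ∀ z : ℝ,
      (4 * z - 4 * q (Fin.last n) + 4 * B) * ∏ i : Fin n, (z + A i)
        - ∑ i : Fin n, (q i.castSucc) ^ 2 * ∏ k ∈ Finset.univ \ {i}, (z + A k)
      = 4 * ∏ j : Fin (n+1), (z - μ j)) :
    q (Fin.last n) = ∑ i : Fin n, A i + B + ∑ j : Fin (n+1), μ j ∧
    ∀ m : Fin n,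
      (q m.castSucc) ^ 2
        = -4 * (∏ j : Fin (n+1), (μ j + A m))
            / ∏ k ∈ Finset.univ \ {m}, (A m - A k) :=
  ⟨eq_sum_add_add_sum_of_forall_eq_prod A _ B _ μ hU,
    fun m => eq_neg_four_mul_prod_div_prod_of_eval_neg A hA _ (fun i => q i.castSucc ^ 2) μ m
      (hU (-A m))⟩

/-- parabolic coordinates expressed through the zeros μ_j of U(z). -/
theorem parabolic_coordinates
    (n : ℕ) (hn : 1 ≤ n) (A : Fin n → ℝ) (hA : Function.Injective A) (B : ℝ)
    (q : Fin (n+1) → ℝ) (μ : Fin (n+1) → ℝ)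
    (hU : ∀ z : ℝ,
      (4 * z - 4 * q (Fin.last n) + 4 * B) * ∏ i : Fin n, (z + A i)
        - ∑ i : Fin n, (q i.castSucc) ^ 2 * ∏ k ∈ Finset.univ \ {i}, (z + A k)
      = 4 * ∏ j : Fin (n+1), (z - μ j)) :
    q (Fin.last n) = ∑ i : Fin n, A i + B + ∑ j : Fin (n+1), μ j ∧
    ∀ m : Fin n,
      (q m.castSucc) ^ 2
        = -4 * (∏ j : Fin (n+1), (μ j + A m))
            / ∏ k ∈ Finset.univ \ {m}, (A m - A k) :=
  parabolic_coordinates_general n A hA B q μ hU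
end
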